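/- The set g₂ := {2-forms ω on ℝ⁷ : σ(ω)ψ₁ = 0} is a linear subspace of Λ²(ℝ⁷) of dimension 14, and its Clifford image {σ(ω) : ω ∈ g₂} is closed under the matrix commutator, i.e. it is a 14-dimensional Lie subalgebra of the 8×8 real matrices. -/

import Mathlib

open Matrix BigOperators

noncomputable section

abbrev M8 : Type := Matrix (Fin 8) (Fin 8) ℝ

/-- 2-forms on ℝ⁷ -/
abbrev Lam2 : Type := AlternatingMap ℝ (Fin 7 → ℝ) ℝ (Fin 2)

/-- 3-forms on ℝ⁷ -/
abbrev Lam3 : Type := AlternatingMap ℝ (Fin 7 → ℝ) ℝ (Fin 3)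

/-- standard basis of ℝ⁷ -/
def u (i : Fin 7) : Fin 7 → ℝ := Pi.single i 1

/-- standard spinor basis ψ₁,…,ψ₈ (0-indexed) -/
def ψ (k : Fin 8) : Fin 8 → ℝ := Pi.single k 1

/-- E_{ij} : ψ_i ↦ ψ_j, ψ_j ↦ -ψ_i -/
def EE (i j : Fin 8) : M8 := Matrix.single j i 1 - Matrix.single i j 1

/-- Clifford multiplication by e₁,…,e₇ (0-indexed) -/
def e : Fin 7 → M8 :=
  ![EE 0 7 + EE 1 6 - EE 2 5 - EE 3 4,
    -EE 0 6 + EE 1 7 + EE 2 4 - EE 3 5,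
    -EE 0 5 + EE 1 4 - EE 2 7 + EE 3 6,
    -EE 0 4 - EE 1 5 - EE 2 6 - EE 3 7,
    -EE 0 2 - EE 1 3 + EE 4 6 + EE 5 7,
    EE 0 3 - EE 1 2 - EE 4 7 + EE 5 6,
    EE 0 1 - EE 2 3 - EE 4 5 + EE 6 7]

def pick2 (i j : Fin 7) : (Fin 7 → ℝ) →ₗ[ℝ] (Fin 2 → ℝ) :=
  LinearMap.pi fun m => LinearMap.proj (![i, j] m)

def pick3 (i j k : Fin 7) : (Fin 7 → ℝ) →ₗ[ℝ] (Fin 3 → ℝ) :=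
  LinearMap.pi fun m => LinearMap.proj (![i, j, k] m)

/-- the 2-form e_i ∧ e_j -/
def w2 (i j : Fin 7) : Lam2 :=
  (Matrix.detRowAlternating : AlternatingMap ℝ (Fin 2 → ℝ) ℝ (Fin 2)).compLinearMap (pick2 i j)

/-- the 3-form e_i ∧ e_j ∧ e_k -/
def w3 (i j k : Fin 7) : Lam3 :=
  (Matrix.detRowAlternating : AlternatingMap ℝ (Fin 3 → ℝ) ℝ (Fin 3)).compLinearMap (pick3 i j k)

/-- Clifford action of a 2-form -/
def σ2 (ω : Lam2) : M8 :=
  ∑ i : Fin 7, ∑ j : Fin 7, if i < j then ω ![u i, u j] • (e i * e j) else 0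

/-- Clifford action of a 3-form -/
def σ3 (T : Lam3) : M8 :=
  ∑ i : Fin 7, ∑ j : Fin 7, ∑ k : Fin 7,
    if i < j ∧ j < k then T ![u i, u j, u k] • (e i * e j * e k) else 0

/-- the skew-symmetric 7×7 matrix A_ω associated to a 2-form ω -/
def A2 (ω : Lam2) : Matrix (Fin 7) (Fin 7) ℝ :=
  ∑ i : Fin 7, ∑ j : Fin 7,
    if i < j then ω ![u i, u j] •
      (Matrix.single j i (1 : ℝ) - Matrix.single i j 1) else 0

/-- T is ω-invariant: the natural action of the 2-form ω on the 3-form T vanishes -/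
def inv3 (ω : Lam2) (T : Lam3) : Prop :=
  ∀ X Y Z : Fin 7 → ℝ,
    T ![A2 ω *ᵥ X, Y, Z] + T ![X, A2 ω *ᵥ Y, Z] + T ![X, Y, A2 ω *ᵥ Z] = 0

/-- the standard G₂ 3-form φ = e₁₂₇+e₁₃₅−e₁₄₆−e₂₃₆−e₂₄₅+e₃₄₇+e₅₆₇ -/
def φf : Lam3 :=
  w3 0 1 6 + w3 0 2 4 - w3 0 3 5 - w3 1 2 5 - w3 1 3 4 + w3 2 3 6 + w3 4 5 6

/-! The matrices `e i` satisfy the Clifford relations, and everything else follows from them.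
For a skew matrix `W` put `β W = ∑ i j, W i j • e i * e j`; then `σ(ω) = ½ β(ω(eᵢ, eⱼ))`.
The relations give `[β W, e k] = 4 ∑ j, W k j • e j`. Anticommuting this once more with `e m`
returns the scalar `-8 W k m`, so `β` is injective on skew matrices; using it twice gives
`[β W, β V] = β (4 (V W - W V))`, so the image of `σ` is closed under commutators, and so is the
part of it that kills `ψ₁`. Finally `ω ↦ σ(ω) ψ₁` lands in `ψ₁^⊥` because `σ(ω)` is skew, and it
hits every `ψₖ`, `k ≥ 2`, through some `eₐ e_b`; its kernel therefore has dimension `21 - 7`. -/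

def IsCliffordFamily {A ι : Type*} [Ring A] [DecidableEq ι] (γ : ι → A) : Prop :=
  ∀ a b, γ a * γ b + γ b * γ a = if a = b then -2 else 0

namespace IsCliffordFamily

variable {A ι : Type*} [Ring A] [DecidableEq ι] {γ : ι → A}

lemma mul_eq_neg_mul (he : IsCliffordFamily γ) {a b : ι} (hab : a ≠ b) :
    γ a * γ b = -(γ b * γ a) :=
  eq_neg_of_add_eq_zero_left (by rw [he, if_neg hab])

lemma mul_mul_sub_mul_mul (he : IsCliffordFamily γ) (i j k : ι) :
    γ i * γ j * γ k - γ k * (γ i * γ j) =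
      (if i = k then 2 * γ j else 0) - (if j = k then 2 * γ i else 0) := by
  calc γ i * γ j * γ k - γ k * (γ i * γ j)
      = γ i * (γ j * γ k + γ k * γ j) - (γ i * γ k + γ k * γ i) * γ j := by noncomm_ring
    _ = _ := by rw [he j k, he i k]; split_ifs <;> noncomm_ring

end IsCliffordFamily

section Bivector

variable {K A ι : Type*} [CommRing K] [Ring A] [Algebra K A] [Fintype ι]

variable (K) in
def cliffordBivector (γ : ι → A) : Matrix ι ι K →ₗ[K] A where
  toFun W := ∑ i, ∑ j, W i j • (γ i * γ j)
  map_add' W V := by simp only [Matrix.add_apply, add_smul, Finset.sum_add_distrib]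
  map_smul' c W := by
    simp only [Matrix.smul_apply, smul_eq_mul, mul_smul, Finset.smul_sum, RingHom.id_apply]

lemma cliffordBivector_apply (γ : ι → A) (W : Matrix ι ι K) :
    cliffordBivector K γ W = ∑ i, ∑ j, W i j • (γ i * γ j) := rfl

lemma cliffordBivector_transpose {n : Type*} [Fintype n] [DecidableEq n]
    {γ : ι → Matrix n n K} (hγ : ∀ i, (γ i)ᵀ = -γ i) (W : Matrix ι ι K) :
    (cliffordBivector K γ W)ᵀ = cliffordBivector K γ Wᵀ := by
  simp only [cliffordBivector_apply, transpose_sum, transpose_smul, transpose_mul, hγ,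
    neg_mul_neg, transpose_apply]
  exact Finset.sum_comm

variable [DecidableEq ι] {γ : ι → A}

lemma cliffordBivector_single (a b : ι) (c : K) :
    cliffordBivector K γ (single a b c) = c • (γ a * γ b) := by
  simp [cliffordBivector_apply, single_apply, ite_and]

namespace IsCliffordFamily

variable (he : IsCliffordFamily γ)
include he

lemma cliffordBivector_mul_sub {W : Matrix ι ι K} (hW : Wᵀ = -W) (k : ι) :
    cliffordBivector K γ W * γ k - γ k * cliffordBivector K γ W =
      (4 : K) • ∑ j, W k j • γ j := by
  have hskew : ∀ i, W i k = -W k i := fun i => by simpa using congr_fun₂ hW k i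
  calc cliffordBivector K γ W * γ k - γ k * cliffordBivector K γ W
      = ∑ i, ∑ j, W i j • (γ i * γ j * γ k - γ k * (γ i * γ j)) := by
        simp only [cliffordBivector_apply, Finset.sum_mul, Finset.mul_sum, smul_mul_assoc,
          mul_smul_comm, smul_sub, Finset.sum_sub_distrib]
    _ = ∑ j, W k j • (2 * γ j) - ∑ i, W i k • (2 * γ i) := by
        simp only [he.mul_mul_sub_mul_mul, smul_sub, Finset.sum_sub_distrib, smul_ite, smul_zero,
          Finset.sum_ite_eq', Finset.mem_univ, if_true]
        rw [Finset.sum_comm]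
        simp only [Finset.sum_ite_eq', Finset.mem_univ, if_true]
    _ = (4 : K) • ∑ j, W k j • γ j := by
        simp only [hskew, two_mul, smul_add, neg_smul, Finset.sum_add_distrib,
          Finset.sum_neg_distrib]
        module

lemma cliffordBivector_anticommutator {W : Matrix ι ι K} (hW : Wᵀ = -W) (k m : ι) :
    (cliffordBivector K γ W * γ k - γ k * cliffordBivector K γ W) * γ m +
      γ m * (cliffordBivector K γ W * γ k - γ k * cliffordBivector K γ W) =
      (-8 * W k m) • (1 : A) := by
  rw [he.cliffordBivector_mul_sub hW, smul_mul_assoc, mul_smul_comm, ← smul_add, Finset.sum_mul,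
    Finset.mul_sum, ← Finset.sum_add_distrib]
  simp only [smul_mul_assoc, mul_smul_comm, ← smul_add, he _ m, smul_ite, smul_zero,
    Finset.sum_ite_eq', Finset.mem_univ, if_true, smul_smul]
  rw [show (-2 : A) = (-2 : K) • (1 : A) by rw [neg_smul, two_smul, one_add_one_eq_two],
    smul_smul]
  ring_nf

lemma cliffordBivector_commutator {W V : Matrix ι ι K} (hW : Wᵀ = -W) :
    cliffordBivector K γ W * cliffordBivector K γ V -
        cliffordBivector K γ V * cliffordBivector K γ W =
      cliffordBivector K γ ((4 : K) • (V * W - W * V)) := by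
  have hskew : ∀ a c, W c a = -W a c := fun a c => by simpa using congr_fun₂ hW a c
  set B := cliffordBivector K γ W
  have hpair : ∀ k l, B * (γ k * γ l) - γ k * γ l * B =
      (4 : K) • ∑ j, (W k j • (γ j * γ l) + W l j • (γ k * γ j)) := fun k l => by
    calc B * (γ k * γ l) - γ k * γ l * B
        = (B * γ k - γ k * B) * γ l + γ k * (B * γ l - γ l * B) := by noncomm_ring
      _ = _ := by
          rw [he.cliffordBivector_mul_sub hW, he.cliffordBivector_mul_sub hW, smul_mul_assoc,
            mul_smul_comm, ← smul_add, Finset.sum_mul, Finset.mul_sum, ← Finset.sum_add_distrib]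
          simp only [smul_mul_assoc, mul_smul_comm]
  have hWV : ∑ k, ∑ l, V k l • ∑ j, W k j • (γ j * γ l) =
      -∑ a, ∑ b, (W * V) a b • (γ a * γ b) := by
    simp only [mul_apply, Finset.smul_sum, Finset.sum_smul, smul_smul, ← Finset.sum_neg_distrib,
      ← neg_smul]
    rw [Finset.sum_congr rfl fun _ _ => Finset.sum_comm, Finset.sum_comm]
    refine Finset.sum_congr rfl fun j _ => ?_
    rw [Finset.sum_comm]
    refine Finset.sum_congr rfl fun l _ => Finset.sum_congr rfl fun k _ => ?_
    rw [hskew j k, mul_neg, mul_comm]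
  have hVW : ∑ k, ∑ l, V k l • ∑ j, W l j • (γ k * γ j) =
      ∑ a, ∑ b, (V * W) a b • (γ a * γ b) := by
    simp only [mul_apply, Finset.smul_sum, Finset.sum_smul, smul_smul]
    exact Finset.sum_congr rfl fun _ _ => Finset.sum_comm
  calc B * cliffordBivector K γ V - cliffordBivector K γ V * B
      = ∑ k, ∑ l, V k l • (B * (γ k * γ l) - γ k * γ l * B) := by
        simp only [cliffordBivector_apply γ V, Finset.mul_sum, Finset.sum_mul, mul_smul_comm,
          smul_mul_assoc, ← smul_sub, ← Finset.sum_sub_distrib, mul_assoc]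
    _ = _ := by
        simp only [hpair, smul_comm _ (4 : K), ← Finset.smul_sum, Finset.sum_add_distrib,
          smul_add, hWV, hVW]
        rw [map_smul, map_sub, cliffordBivector_apply, cliffordBivector_apply]
        module

end IsCliffordFamily

end Bivector

section Field

variable {K A ι : Type*} [Field K] [CharZero K] [Fintype ι]

lemma IsCliffordFamily.injOn_cliffordBivector [DecidableEq ι] [Ring A] [Nontrivial A]
    [Algebra K A] {γ : ι → A} (he : IsCliffordFamily γ) :
    Set.InjOn (cliffordBivector K γ) {W | Wᵀ = -W} := by
  intro W hW V hV hWV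
  have hskew : (W - V)ᵀ = -(W - V) := by
    rw [transpose_sub, show Wᵀ = -W from hW, show Vᵀ = -V from hV, neg_sub_neg, neg_sub]
  ext k m
  have h := he.cliffordBivector_anticommutator hskew k m
  simp only [map_sub, hWV, sub_self, zero_mul, mul_zero, add_zero] at h
  simpa [sub_eq_zero] using h

lemma cliffordBivector_apply_self {n : Type*} [Fintype n] [DecidableEq n]
    {γ : ι → Matrix n n K} (hγ : ∀ i, (γ i)ᵀ = -γ i) {W : Matrix ι ι K} (hW : Wᵀ = -W) (a : n) :
    cliffordBivector K γ W a a = 0 := by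
  have h := congr_fun₂ (cliffordBivector_transpose hγ W) a a
  rw [transpose_apply, hW, map_neg, neg_apply] at h
  exact self_eq_neg.mp h

end Field

lemma finrank_ker_proj_add_one {K ι : Type*} [Field K] [Fintype ι] (i : ι) :
    Module.finrank K (LinearMap.ker (LinearMap.proj i : (ι → K) →ₗ[K] K)) + 1 =
      Fintype.card ι := by
  have h := (LinearMap.proj i : (ι → K) →ₗ[K] K).finrank_range_add_finrank_ker
  rw [LinearMap.range_eq_top.mpr fun r => ⟨fun _ => r, rfl⟩, finrank_top, Module.finrank_self,
    Module.finrank_fintype_fun_eq_card] at h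
  omega

lemma AlternatingMap.sum_apply {R M N ι κ : Type*} [Semiring R] [AddCommMonoid M] [Module R M]
    [AddCommMonoid N] [Module R N] (s : Finset κ) (f : κ → M [⋀^ι]→ₗ[R] N) (v : ι → M) :
    (∑ k ∈ s, f k) v = ∑ k ∈ s, f k v :=
  map_sum ({ toFun g := g v, map_zero' := rfl, map_add' _ _ := rfl } : (M [⋀^ι]→ₗ[R] N) →+ N) f s

-- The generators `e` over an arbitrary ring, so that identities among them can be checked by
-- `decide` over `ℤ`.
def eeOver (R : Type*) [Ring R] (i j : Fin 8) : Matrix (Fin 8) (Fin 8) R :=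
  Matrix.single j i 1 - Matrix.single i j 1

def cliffordGen (R : Type*) [Ring R] : Fin 7 → Matrix (Fin 8) (Fin 8) R :=
  ![eeOver R 0 7 + eeOver R 1 6 - eeOver R 2 5 - eeOver R 3 4,
    -eeOver R 0 6 + eeOver R 1 7 + eeOver R 2 4 - eeOver R 3 5,
    -eeOver R 0 5 + eeOver R 1 4 - eeOver R 2 7 + eeOver R 3 6,
    -eeOver R 0 4 - eeOver R 1 5 - eeOver R 2 6 - eeOver R 3 7,
    -eeOver R 0 2 - eeOver R 1 3 + eeOver R 4 6 + eeOver R 5 7,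
    eeOver R 0 3 - eeOver R 1 2 - eeOver R 4 7 + eeOver R 5 6,
    eeOver R 0 1 - eeOver R 2 3 - eeOver R 4 5 + eeOver R 6 7]

lemma mapMatrix_cliffordGen {R S : Type*} [Ring R] [Ring S] (f : R →+* S) (i : Fin 7) :
    f.mapMatrix (cliffordGen R i) = cliffordGen S i := by
  have hee : ∀ a b, f.mapMatrix (eeOver R a b) = eeOver S a b := fun a b => by
    simp only [eeOver, map_sub, RingHom.mapMatrix_apply, Matrix.map_single, map_one]
  fin_cases i <;> simp [cliffordGen, map_add, map_sub, map_neg, hee]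

lemma e_eq_mapMatrix (i : Fin 7) : e i = (Int.castRingHom ℝ).mapMatrix (cliffordGen ℤ i) := by
  rw [mapMatrix_cliffordGen]
  rfl

lemma isCliffordFamily_e : IsCliffordFamily e := by
  have hZ : IsCliffordFamily (cliffordGen ℤ) := by unfold IsCliffordFamily; decide
  intro a b
  have h := congrArg (Int.castRingHom ℝ).mapMatrix (hZ a b)
  rw [map_add, map_mul, map_mul, ← e_eq_mapMatrix, ← e_eq_mapMatrix] at h
  rw [h, apply_ite (Int.castRingHom ℝ).mapMatrix, map_neg, map_ofNat, map_zero]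

lemma transpose_e (i : Fin 7) : (e i)ᵀ = -e i := by
  have hEE : ∀ a b, (EE a b)ᵀ = -EE a b := fun a b => by
    simp [EE, transpose_sub, transpose_single]
  fin_cases i <;> simp [e, transpose_add, transpose_sub, transpose_neg, hEE] <;> abel

lemma exists_mul_mulVec_eq {k : Fin 8} (hk : k ≠ 0) :
    ∃ a b : Fin 7, a ≠ b ∧ (e a * e b) *ᵥ ψ 0 = ψ k := by
  obtain ⟨a, b, hab, h⟩ : ∃ a b : Fin 7, a ≠ b ∧
      ∀ r, (cliffordGen ℤ a * cliffordGen ℤ b) r 0 = if r = k then 1 else 0 := by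
    revert k; decide
  refine ⟨a, b, hab, funext fun r => ?_⟩
  rw [ψ, ψ, mulVec_single_one, e_eq_mapMatrix, e_eq_mapMatrix, ← map_mul, col_apply,
    RingHom.mapMatrix_apply, map_apply, h r, Pi.single_apply]
  split_ifs <;> simp

lemma finrank_lam2 : Module.finrank ℝ Lam2 = 21 := by
  rw [exteriorPower.alternatingMapLinearEquiv.finrank_eq, Module.finrank_linearMap_self,
    exteriorPower.finrank_eq, Module.finrank_fin_fun]
  rfl

instance : FiniteDimensional ℝ Lam2 := Module.finite_of_finrank_eq_succ finrank_lam2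

lemma w2_apply (i j : Fin 7) (X Y : Fin 7 → ℝ) : w2 i j ![X, Y] = X i * Y j - X j * Y i := by
  change det (of fun m => pick2 i j (![X, Y] m)) = _
  simp [det_fin_two, pick2]

def formMatrix : Lam2 →ₗ[ℝ] Matrix (Fin 7) (Fin 7) ℝ where
  toFun ω := Matrix.of fun i j => ω ![u i, u j]
  map_add' ω η := by ext; simp
  map_smul' c ω := by ext; simp

lemma formMatrix_apply (ω : Lam2) (i j : Fin 7) : formMatrix ω i j = ω ![u i, u j] := rfl

lemma formMatrix_transpose (ω : Lam2) : (formMatrix ω)ᵀ = -formMatrix ω := by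
  ext i j
  have hswap : ![u j, u i] = ![u i, u j] ∘ Equiv.swap 0 1 := by
    ext m; fin_cases m <;> rfl
  rw [transpose_apply, neg_apply, formMatrix_apply, formMatrix_apply, hswap,
    ω.map_swap _ (by decide)]

lemma formMatrix_injective : Function.Injective formMatrix := by
  intro ω η h
  refine Module.Basis.ext_alternating (Pi.basisFun ℝ (Fin 7)) fun v _ => ?_
  have hv : (fun m => Pi.basisFun ℝ (Fin 7) (v m)) = ![u (v 0), u (v 1)] := by
    ext m; fin_cases m <;> simp [u]
  rw [hv]
  exact congr_fun₂ h (v 0) (v 1)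

def formOfMatrix (C : Matrix (Fin 7) (Fin 7) ℝ) : Lam2 := ∑ a, ∑ b, (C a b / 2) • w2 a b

lemma formMatrix_formOfMatrix {C : Matrix (Fin 7) (Fin 7) ℝ} (hC : Cᵀ = -C) :
    formMatrix (formOfMatrix C) = C := by
  ext k l
  have hlk : C l k = -C k l := by simpa using congr_fun₂ hC k l
  simp [formMatrix_apply, formOfMatrix, AlternatingMap.sum_apply, w2_apply, u, Pi.single_apply,
    mul_sub, Finset.sum_sub_distrib, hlk]
  ring

lemma cliffordBivector_formMatrix (ω : Lam2) :
    cliffordBivector ℝ e (formMatrix ω) = (2 : ℝ) • σ2 ω := by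
  set f : Fin 7 → Fin 7 → M8 := fun i j => ω ![u i, u j] • (e i * e j)
  -- the terms for `(i, j)` and `(j, i)` agree, and the diagonal ones vanish
  have hf : ∀ i j, f i j = (if i < j then f i j else 0) + (if j < i then f j i else 0) := by
    intro i j
    rcases lt_trichotomy i j with h | rfl | h
    · simp [h, h.not_gt]
    · simp [f, ω.map_eq_zero_of_eq ![u i, u i] (i := 0) (j := 1) rfl (by decide)]
    · have hω := congr_fun₂ (formMatrix_transpose ω) i j
      rw [transpose_apply, neg_apply, formMatrix_apply, formMatrix_apply] at hω
      simp [h, h.not_gt, f, hω, isCliffordFamily_e.mul_eq_neg_mul h.ne]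
  calc cliffordBivector ℝ e (formMatrix ω) = ∑ i, ∑ j, f i j := rfl
    _ = ∑ i, ∑ j, (if i < j then f i j else 0) + ∑ i, ∑ j, (if j < i then f j i else 0) := by
      rw [← Finset.sum_add_distrib]
      refine Finset.sum_congr rfl fun i _ => ?_
      rw [← Finset.sum_add_distrib]
      exact Finset.sum_congr rfl fun j _ => hf i j
    _ = (2 : ℝ) • σ2 ω := by
      rw [Finset.sum_comm (f := fun i j => if j < i then f j i else 0), two_smul]
      rfl

def cliffordAction : Lam2 →ₗ[ℝ] M8 := (2⁻¹ : ℝ) • (cliffordBivector ℝ e ∘ₗ formMatrix)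

lemma cliffordAction_apply (ω : Lam2) : cliffordAction ω = σ2 ω := by
  simp [cliffordAction, cliffordBivector_formMatrix, smul_smul]

lemma cliffordAction_injective : Function.Injective cliffordAction := by
  intro ω η h
  refine formMatrix_injective <| isCliffordFamily_e.injOn_cliffordBivector
    (formMatrix_transpose ω) (formMatrix_transpose η) ?_
  simpa [cliffordAction] using h

lemma cliffordAction_formOfMatrix {C : Matrix (Fin 7) (Fin 7) ℝ} (hC : Cᵀ = -C) :
    cliffordAction (formOfMatrix C) = (2⁻¹ : ℝ) • cliffordBivector ℝ e C := by
  simp [cliffordAction, formMatrix_formOfMatrix hC]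

lemma cliffordAction_formOfMatrix_single {a b : Fin 7} (hab : a ≠ b) :
    cliffordAction (formOfMatrix (single a b 1 - single b a 1)) = e a * e b := by
  rw [cliffordAction_formOfMatrix
      (by rw [transpose_sub, transpose_single, transpose_single, neg_sub]),
    map_sub, cliffordBivector_single, cliffordBivector_single, one_smul, one_smul,
    isCliffordFamily_e.mul_eq_neg_mul hab.symm]
  module

lemma cliffordAction_commutator (ω η : Lam2) :
    cliffordAction ω * cliffordAction η - cliffordAction η * cliffordAction ω =
      cliffordAction
        (formOfMatrix ((2 : ℝ) • (formMatrix η * formMatrix ω - formMatrix ω * formMatrix η))) := by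
  have hC : ((2 : ℝ) • (formMatrix η * formMatrix ω - formMatrix ω * formMatrix η))ᵀ =
      -((2 : ℝ) • (formMatrix η * formMatrix ω - formMatrix ω * formMatrix η)) := by
    simp only [transpose_smul, transpose_sub, transpose_mul, formMatrix_transpose, neg_mul_neg,
      neg_sub, smul_sub]
  rw [cliffordAction_formOfMatrix hC]
  simp only [cliffordAction, LinearMap.smul_apply, LinearMap.comp_apply, smul_mul_smul_comm,
    ← smul_sub, isCliffordFamily_e.cliffordBivector_commutator (formMatrix_transpose ω),
    map_smul, smul_smul]
  norm_num

def actionOnψ₀ : Lam2 →ₗ[ℝ] (Fin 8 → ℝ) := (mulVecBilin ℝ ℝ).flip (ψ 0) ∘ₗ cliffordAction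

lemma actionOnψ₀_apply (ω : Lam2) : actionOnψ₀ ω = cliffordAction ω *ᵥ ψ 0 := rfl

lemma range_actionOnψ₀ : LinearMap.range actionOnψ₀ = LinearMap.ker (LinearMap.proj 0) := by
  apply le_antisymm
  · rintro _ ⟨ω, rfl⟩
    change (cliffordAction ω *ᵥ ψ 0) 0 = 0
    rw [ψ, mulVec_single_one, col_apply, cliffordAction, LinearMap.smul_apply, Matrix.smul_apply,
      LinearMap.comp_apply, cliffordBivector_apply_self transpose_e (formMatrix_transpose ω),
      smul_zero]
  · intro v hv
    rw [← Finset.univ_sum_single v]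
    refine Submodule.sum_mem _ fun k _ => ?_
    by_cases hk : k = 0
    · rw [hk, show v 0 = 0 from hv, Pi.single_zero]
      exact zero_mem _
    · obtain ⟨a, b, hab, h⟩ := exists_mul_mulVec_eq hk
      refine ⟨v k • formOfMatrix (single a b 1 - single b a 1), ?_⟩
      rw [map_smul, actionOnψ₀_apply, cliffordAction_formOfMatrix_single hab, h, ψ,
        ← Pi.single_smul', smul_eq_mul, mul_one]

def g2 : Submodule ℝ Lam2 := LinearMap.ker actionOnψ₀

lemma finrank_g2 : Module.finrank ℝ g2 = 14 := by
  have h := actionOnψ₀.finrank_range_add_finrank_ker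
  have h7 := finrank_ker_proj_add_one (K := ℝ) (0 : Fin 8)
  rw [range_actionOnψ₀, finrank_lam2] at h
  rw [Fintype.card_fin] at h7
  change Module.finrank ℝ (LinearMap.ker actionOnψ₀) = 14
  omega

lemma commutator_mem_map_g2 {A B : M8} (hA : A ∈ g2.map cliffordAction)
    (hB : B ∈ g2.map cliffordAction) : A * B - B * A ∈ g2.map cliffordAction := by
  obtain ⟨ω, hω, rfl⟩ := hA
  obtain ⟨η, hη, rfl⟩ := hB
  refine ⟨_, ?_, (cliffordAction_commutator ω η).symm⟩
  change actionOnψ₀ _ = 0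
  rw [actionOnψ₀_apply, ← cliffordAction_commutator, sub_mulVec, ← mulVec_mulVec,
    ← mulVec_mulVec, ← actionOnψ₀_apply, ← actionOnψ₀_apply, show actionOnψ₀ ω = 0 from hω,
    show actionOnψ₀ η = 0 from hη, mulVec_zero, mulVec_zero, sub_zero]

theorem stmt_1 :
    ∃ (V : Submodule ℝ Lam2) (W : Submodule ℝ M8),
      (V : Set Lam2) = {ω : Lam2 | σ2 ω *ᵥ ψ 0 = 0} ∧
      Module.finrank ℝ V = 14 ∧
      (W : Set M8) = (fun ω => σ2 ω) '' (V : Set Lam2) ∧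
      Module.finrank ℝ W = 14 ∧
      (∀ A ∈ W, ∀ B ∈ W, A * B - B * A ∈ W) := by
  refine ⟨g2, g2.map cliffordAction, ?_, finrank_g2, ?_, ?_,
    fun A hA B hB => commutator_mem_map_g2 hA hB⟩
  · ext ω
    simp [g2, actionOnψ₀_apply, cliffordAction_apply]
  · rw [Submodule.map_coe]
    exact Set.image_congr fun ω _ => cliffordAction_apply ω
  · rw [← finrank_g2]
    exact (Submodule.equivMapOfInjective _ cliffordAction_injective g2).finrank_eq.symm
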